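/- arXiv:1008.4362 — 3 statements merged into one kernel-verified Lean document; each statement's English description precedes it below -/
import Mathlib

section
/- For real numbers $\lambda_1, \ldots, \lambda_N$ with $N$ even, the Pfaffian of the antisymmetric matrix $\mathbf{T}(\boldsymbol\lambda) = [\mathrm{sgn}(\lambda_n - \lambda_m)]_{m,n=1}^N$ equals $\prod_{m<n}\mathrm{sgn}(\lambda_n - \lambda_m)$. -/
/-- The Pfaffian of a `2M × 2M` real matrix. -/
noncomputable def pf {M : ℕ} (A : Matrix (Fin (2*M)) (Fin (2*M)) ℝ) : ℝ :=
  (1 / (2^M * (Nat.factorial M) : ℝ)) *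
    ∑ σ : Equiv.Perm (Fin (2*M)), ((Equiv.Perm.sign σ : ℤ) : ℝ) *
      ∏ m : Fin M,
        A (σ ⟨2*(m:ℕ), by have := m.isLt; omega⟩) (σ ⟨2*(m:ℕ)+1, by have := m.isLt; omega⟩)

/-!
Both sides are alternating functions of `λ`: permuting the `λ`'s by `τ` multiplies them by
`sgn τ` (the Pfaffian by reindexing its permutation sum, the product because it is the sign of
the Vandermonde determinant). So both vanish when two `λ`'s coincide, and after sorting it
suffices to take `λ` strictly increasing, where the product is `1`.

For increasing `λ`, read each `σ` as a perfect matching of the values, `σ(2m)` with `σ(2m+1)`.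
If some pair of consecutive values `2k, 2k+1` is not matched, exchanging these two values flips
`sgn σ` but changes no relative order inside a matched pair, so these terms cancel in pairs.
The remaining `2^M M!` permutations keep the pairs `{2k, 2k+1}` together and each contributes `1`.
-/

open Equiv Equiv.Perm Finset

theorem Real.sign_eq_coe_sign (r : ℝ) : Real.sign r = (SignType.sign r : ℝ) := by
  rcases lt_trichotomy r 0 with h | rfl | h
  · simp [Real.sign_of_neg h, h]
  · simp
  · simp [Real.sign_of_pos h, h]

theorem Real.sign_prod {ι : Type*} (s : Finset ι) (f : ι → ℝ) :
    Real.sign (∏ i ∈ s, f i) = ∏ i ∈ s, Real.sign (f i) := by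
  simp only [Real.sign_eq_coe_sign]
  exact map_prod ((SignType.castHom : SignType →*₀ ℝ).toMonoidHom.comp signHom.toMonoidHom) f s

theorem Real.sign_units_mul (u : ℤˣ) (r : ℝ) : Real.sign (u * r) = u • Real.sign r := by
  rcases Int.units_eq_one_or u with rfl | rfl <;> simp [Real.sign_neg]

theorem Real.sign_sub_congr {x y x' y' : ℝ} (h₁ : x < y ↔ x' < y') (h₂ : y < x ↔ y' < x') :
    Real.sign (y - x) = Real.sign (y' - x') := by
  simp only [Real.sign, sub_neg, sub_pos, h₁, h₂]

theorem Int.cast_units_mul_self {R : Type*} [Ring R] (u : ℤˣ) : ((u : ℤ) : R) * u = 1 := by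
  rw [← Int.cast_mul, ← Units.val_mul, Int.units_mul_self, Units.val_one, Int.cast_one]

theorem sign_sub_swap_apply {X : Type*} [DecidableEq X] {L : X → ℝ} (hL : Function.Injective L)
    {a b : X} (hsep : ∀ x, x ≠ a → x ≠ b → (L x < L a ↔ L x < L b)) {u v : X}
    (h : ¬ (u = a ∧ v = b)) (h' : ¬ (u = b ∧ v = a)) :
    Real.sign (L (swap a b v) - L (swap a b u)) = Real.sign (L v - L u) := by
  have hsep' : ∀ x, x ≠ a → x ≠ b → (L a < L x ↔ L b < L x) := fun x ha hb => by
    have := hsep x ha hb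
    have := hL.ne ha
    have := hL.ne hb
    grind
  have hlt : ∀ x y, ¬ (x = a ∧ y = b) → ¬ (x = b ∧ y = a) →
      (L (swap a b x) < L (swap a b y) ↔ L x < L y) := by
    intro x y h h'
    rcases eq_or_ne x y with rfl | hxy
    · simp
    rcases eq_or_ne x a with hxa | hxa <;> rcases eq_or_ne x b with hxb | hxb <;>
      rcases eq_or_ne y a with hya | hya <;> rcases eq_or_ne y b with hyb | hyb <;>
      simp_all [swap_apply_of_ne_of_ne]
  exact Real.sign_sub_congr (hlt u v h h') (hlt v u (by tauto) (by tauto))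

section Alternating

variable {α G : Type*} [AddCommGroup G] {n : ℕ}

def IsAlternating (F : (Fin n → α) → G) : Prop :=
  ∀ (l : Fin n → α) (τ : Perm (Fin n)), F (l ∘ τ) = sign τ • F l

namespace IsAlternating

variable {F F' : (Fin n → α) → G}

theorem eq_sign_smul_comp (hF : IsAlternating F) (l : Fin n → α) (τ : Perm (Fin n)) :
    F l = sign τ • F (l ∘ τ) := by
  rw [hF, smul_smul, Int.units_mul_self, one_smul]

theorem eq_zero_of_not_injective [IsAddTorsionFree G] (hF : IsAlternating F) {l : Fin n → α}
    (hl : ¬ Function.Injective l) : F l = 0 := by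
  obtain ⟨i, j, hlij, hij⟩ : ∃ i j, l i = l j ∧ i ≠ j := by
    simpa [Function.Injective] using hl
  have hswap : l ∘ swap i j = l := by
    ext k
    rcases eq_or_ne k i with rfl | hki
    · simp [hlij]
    rcases eq_or_ne k j with rfl | hkj
    · simp [hlij]
    · simp [swap_apply_of_ne_of_ne hki hkj]
  have := hF l (swap i j)
  rwa [hswap, sign_swap hij, Units.neg_smul, one_smul, self_eq_neg] at this

theorem eq_of_eq_on_strictMono [LinearOrder α] [IsAddTorsionFree G] (hF : IsAlternating F)
    (hF' : IsAlternating F') (h : ∀ l, StrictMono l → F l = F' l) (l : Fin n → α) :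
    F l = F' l := by
  by_cases hl : Function.Injective l
  · have hsort : StrictMono (l ∘ Tuple.sort l) :=
      (Tuple.monotone_sort l).strictMono_of_injective (hl.comp (Tuple.sort l).injective)
    rw [hF.eq_sign_smul_comp l (Tuple.sort l), hF'.eq_sign_smul_comp l (Tuple.sort l), h _ hsort]
  · rw [hF.eq_zero_of_not_injective hl, hF'.eq_zero_of_not_injective hl]

end IsAlternating

end Alternating

theorem prod_sign_sub_eq_sign_det_vandermonde {n : ℕ} (l : Fin n → ℝ) :
    ∏ q ∈ univ.filter (fun q : Fin n × Fin n => q.1 < q.2), Real.sign (l q.2 - l q.1) =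
      Real.sign (Matrix.vandermonde l).det := by
  rw [Matrix.det_vandermonde, Real.sign_prod, prod_filter, Fintype.prod_prod_type]
  refine prod_congr rfl fun i _ => ?_
  rw [Real.sign_prod, ← prod_filter]
  congr 1
  ext j
  simp

theorem isAlternating_sign_det_vandermonde {n : ℕ} :
    IsAlternating fun l : Fin n → ℝ => Real.sign (Matrix.vandermonde l).det := by
  intro l τ
  rw [← Real.sign_units_mul, ← Matrix.det_permute]
  rfl

noncomputable def signMatrix {X : Type*} (L : X → ℝ) : Matrix X X ℝ :=
  Matrix.of fun u v => Real.sign (L v - L u)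

namespace PairedPerm

variable {ι : Type*}

def pairFlip : Perm (ι × Fin 2) := prodCongrRight fun _ => swap 0 1

@[simp] theorem pairFlip_apply (x : ι × Fin 2) : pairFlip x = (x.1, swap 0 1 x.2) := rfl

def partner (σ : Perm (ι × Fin 2)) : Perm (ι × Fin 2) := σ * pairFlip * σ⁻¹

theorem partner_apply_apply (σ : Perm (ι × Fin 2)) (x : ι × Fin 2) :
    partner σ (σ x) = σ (pairFlip x) := by
  simp [partner]

theorem partner_involutive (σ : Perm (ι × Fin 2)) : Function.Involutive (partner σ) := by
  intro x
  simp [partner]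

theorem partner_eq_pairFlip_iff {σ : Perm (ι × Fin 2)} :
    partner σ = pairFlip ↔ Commute σ pairFlip := by
  rw [partner, mul_inv_eq_iff_eq_mul]
  rfl

theorem partner_swap_mul [DecidableEq ι] (a b : ι × Fin 2) (σ : Perm (ι × Fin 2)) :
    partner (swap a b * σ) = swap a b * partner σ * swap a b := by
  simp only [partner, mul_inv_rev, swap_inv, mul_assoc]

theorem fst_apply_eq_of_commute {σ : Perm (ι × Fin 2)} (h : Commute σ pairFlip) (k : ι)
    (i j : Fin 2) : (σ (k, i)).1 = (σ (k, j)).1 := by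
  have hflip : (σ (k, 1)).1 = (σ (k, 0)).1 := by
    simpa using congrArg Prod.fst (DFunLike.congr_fun h.eq (k, 0))
  fin_cases i <;> fin_cases j <;> simp [hflip]

theorem commute_prodShear_pairFlip (c : Perm ι) (f : ι → Perm (Fin 2)) :
    Commute (prodShear c f : Perm (ι × Fin 2)) pairFlip := by
  have hf : ∀ g : Perm (Fin 2), ∀ i, g (swap 0 1 i) = swap 0 1 (g i) := by decide
  ext ⟨k, i⟩ <;> simp [hf]

theorem exists_eq_prodShear_of_commute [Finite ι] {σ : Perm (ι × Fin 2)}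
    (h : Commute σ pairFlip) : ∃ (c : Perm ι) (f : ι → Perm (Fin 2)), σ = prodShear c f := by
  have hc : Function.LeftInverse (fun k => (σ⁻¹ (k, 0)).1) (fun k => (σ (k, 0)).1) := fun k => by
    dsimp only
    rw [fst_apply_eq_of_commute h.inv_left _ 0 (σ (k, 0)).2, Prod.mk.eta]
    simp
  have hf (k : ι) : Function.Injective fun i => (σ (k, i)).2 := fun i j hij => by
    simpa using σ.injective (Prod.ext (fst_apply_eq_of_commute h k i j) hij)
  refine ⟨ofBijective _ (Finite.injective_iff_bijective.1 hc.injective),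
    fun k => ofBijective _ (Finite.injective_iff_bijective.1 (hf k)), ?_⟩
  ext ⟨k, i⟩ <;> simp [fst_apply_eq_of_commute h k 0 i]

theorem prodShear_injective :
    Function.Injective fun p : Perm ι × (ι → Perm (Fin 2)) =>
      (prodShear p.1 p.2 : Perm (ι × Fin 2)) := by
  rintro ⟨c, f⟩ ⟨c', f'⟩ h
  have h' := DFunLike.congr_fun h
  simp only [prodShear_apply, Prod.mk.injEq] at h'
  exact Prod.ext (Equiv.ext fun k => (h' (k, 0)).1)
    (funext fun k => Equiv.ext fun i => (h' (k, i)).2)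

theorem sign_sub_perm_fin_two {L : ι × Fin 2 → ℝ} (hpair : ∀ k, L (k, 0) < L (k, 1)) (k : ι)
    (g : Perm (Fin 2)) :
    Real.sign (L (k, g 1) - L (k, g 0)) = sign g := by
  have hg : ∀ g : Perm (Fin 2), g = 1 ∨ g = swap 0 1 := by decide
  rcases hg g with rfl | rfl
  · simp [Real.sign_of_pos, hpair k]
  · simp [Real.sign_of_neg, hpair k]

variable [Fintype ι] [DecidableEq ι]

theorem sign_prodShear (c : Perm ι) (f : ι → Perm (Fin 2)) :
    sign (prodShear c f : Perm (ι × Fin 2)) = ∏ k, sign (f k) := by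
  have : (prodShear c f : Perm (ι × Fin 2)) = prodCongrLeft (fun _ => c) * prodCongrRight f := by
    ext <;> rfl
  rw [this, Perm.sign_mul, sign_prodCongrLeft, sign_prodCongrRight, prod_const, card_univ,
    Fintype.card_fin, Int.units_sq, one_mul]

def badPairs (σ : Perm (ι × Fin 2)) : Finset ι :=
  univ.filter fun k => partner σ (k, 0) ≠ (k, 1)

theorem badPairs_eq_empty_iff {σ : Perm (ι × Fin 2)} :
    badPairs σ = ∅ ↔ Commute σ pairFlip := by
  rw [← partner_eq_pairFlip_iff, badPairs, filter_eq_empty_iff]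
  simp only [mem_univ, not_not, true_implies]
  refine ⟨fun h => Equiv.ext fun ⟨k, i⟩ => ?_, fun h k => by simp [h]⟩
  fin_cases i
  · simpa using @h k
  · simpa [(partner_involutive σ).eq_iff] using (@h k).symm

theorem badPairs_swap_mul (σ : Perm (ι × Fin 2)) (k : ι) :
    badPairs (swap (k, 0) (k, 1) * σ) = badPairs σ := by
  ext j
  simp only [badPairs, mem_filter, mem_univ, true_and, partner_swap_mul, Perm.mul_apply,
    Ne, swap_apply_eq_iff]
  rcases eq_or_ne j k with rfl | hjk
  · rw [swap_apply_left, swap_apply_right, (partner_involutive σ).eq_iff, eq_comm]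
  · rw [swap_apply_of_ne_of_ne (by simp [hjk]) (by simp [hjk]),
      swap_apply_of_ne_of_ne (by simp [hjk]) (by simp [hjk])]

def pfSummand (B : Matrix (ι × Fin 2) (ι × Fin 2) ℝ) (σ : Perm (ι × Fin 2)) : ℝ :=
  sign σ * ∏ k, B (σ (k, 0)) (σ (k, 1))

variable {L : ι × Fin 2 → ℝ}

theorem pfSummand_prodShear (hpair : ∀ k, L (k, 0) < L (k, 1)) (c : Perm ι)
    (f : ι → Perm (Fin 2)) : pfSummand (signMatrix L) (prodShear c f) = 1 := by
  simp only [pfSummand, signMatrix, Matrix.of_apply, prodShear_apply, sign_prodShear,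
    sign_sub_perm_fin_two hpair, Units.coe_prod, Int.cast_prod, ← prod_mul_distrib]
  exact prod_eq_one fun k _ => Int.cast_units_mul_self _

theorem pfSummand_swap_mul (hL : Function.Injective L)
    (hsep : ∀ k x, x.1 ≠ k → (L x < L (k, 0) ↔ L x < L (k, 1))) {σ : Perm (ι × Fin 2)} {k : ι}
    (hk : k ∈ badPairs σ) :
    pfSummand (signMatrix L) (swap (k, 0) (k, 1) * σ) = -pfSummand (signMatrix L) σ := by
  have hk : partner σ (k, 0) ≠ (k, 1) := (mem_filter.1 hk).2
  have hsep' : ∀ x, x ≠ (k, 0) → x ≠ (k, 1) → (L x < L (k, 0) ↔ L x < L (k, 1)) := by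
    rintro ⟨j, i⟩ h0 h1
    refine hsep k _ fun hjk => ?_
    fin_cases i <;> simp_all
  have hpartner (m : ι) (i : Fin 2) : partner σ (σ (m, i)) = σ (m, swap 0 1 i) := by
    simp [partner_apply_apply]
  have hfactor (m : ι) :
      Real.sign (L (swap (k, 0) (k, 1) (σ (m, 1))) - L (swap (k, 0) (k, 1) (σ (m, 0)))) =
        Real.sign (L (σ (m, 1)) - L (σ (m, 0))) := by
    refine sign_sub_swap_apply hL hsep' ?_ ?_ <;> rintro ⟨h0, h1⟩
    · exact hk (by rw [← h0, hpartner, ← h1]; rfl)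
    · exact hk (by rw [← h1, hpartner, ← h0]; rfl)
  rw [pfSummand, pfSummand, Perm.sign_mul, sign_swap (by simp)]
  simp only [signMatrix, Matrix.of_apply, Perm.mul_apply, hfactor]
  push_cast
  ring

theorem sum_pfSummand_filter_badPairs_eq_empty (hpair : ∀ k, L (k, 0) < L (k, 1)) :
    ∑ σ ∈ univ.filter (fun σ => badPairs σ = ∅), pfSummand (signMatrix L) σ =
      (Fintype.card ι).factorial * 2 ^ Fintype.card ι := by
  calc _ = ∑ p : Perm ι × (ι → Perm (Fin 2)), pfSummand (signMatrix L) (prodShear p.1 p.2) := by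
        refine (sum_bij (fun p _ => prodShear p.1 p.2) (fun p _ => ?_)
          (fun p _ q _ h => prodShear_injective h) (fun σ hσ => ?_) (fun _ _ => rfl)).symm
        · simpa [badPairs_eq_empty_iff] using commute_prodShear_pairFlip p.1 p.2
        · obtain ⟨c, f, rfl⟩ :=
            exists_eq_prodShear_of_commute (badPairs_eq_empty_iff.1 (mem_filter.1 hσ).2)
          exact ⟨(c, f), mem_univ _, rfl⟩
    _ = _ := by simp [pfSummand_prodShear hpair, Fintype.card_perm, mul_comm]

theorem sum_pfSummand_filter_badPairs_ne_empty [LinearOrder ι] (hL : Function.Injective L)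
    (hsep : ∀ k x, x.1 ≠ k → (L x < L (k, 0) ↔ L x < L (k, 1))) :
    ∑ σ ∈ univ.filter (fun σ => badPairs σ ≠ ∅), pfSummand (signMatrix L) σ = 0 := by
  have hbad (σ : Perm (ι × Fin 2)) (hσ : σ ∈ univ.filter (fun σ => badPairs σ ≠ ∅)) :
      (badPairs σ).Nonempty :=
    nonempty_iff_ne_empty.2 (mem_filter.1 hσ).2
  refine sum_involution
    (fun σ hσ => swap ((badPairs σ).min' (hbad σ hσ), 0) ((badPairs σ).min' (hbad σ hσ), 1) * σ)
    (fun σ hσ => by rw [pfSummand_swap_mul hL hsep (min'_mem _ _), add_neg_cancel])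
    (fun σ hσ _ => by simp) (fun σ hσ => by simpa [badPairs_swap_mul] using hσ) (fun σ hσ => ?_)
  simp only [badPairs_swap_mul]
  rw [← mul_assoc, swap_mul_self, one_mul]

theorem sum_pfSummand_signMatrix [LinearOrder ι] (hL : Function.Injective L)
    (hpair : ∀ k, L (k, 0) < L (k, 1))
    (hsep : ∀ k x, x.1 ≠ k → (L x < L (k, 0) ↔ L x < L (k, 1))) :
    ∑ σ, pfSummand (signMatrix L) σ = (Fintype.card ι).factorial * 2 ^ Fintype.card ι := by
  rw [← sum_filter_add_sum_filter_not univ (fun σ => badPairs σ = ∅),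
    sum_pfSummand_filter_badPairs_eq_empty hpair, sum_pfSummand_filter_badPairs_ne_empty hL hsep,
    add_zero]

end PairedPerm

open PairedPerm

section Pfaffian

variable {M : ℕ}

def finPairEquiv (M : ℕ) : Fin M × Fin 2 ≃ Fin (2 * M) :=
  finProdFinEquiv.trans (finCongr (mul_comm M 2))

@[simp] theorem finPairEquiv_val (x : Fin M × Fin 2) :
    (finPairEquiv M x : ℕ) = 2 * x.1 + x.2 := by
  simp [finPairEquiv, add_comm]

theorem pf_submatrix_perm (A : Matrix (Fin (2 * M)) (Fin (2 * M)) ℝ) (τ : Perm (Fin (2 * M))) :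
    pf (A.submatrix τ τ) = sign τ • pf A := by
  rw [pf, pf, Units.smul_def, zsmul_eq_mul, mul_left_comm]
  congr 1
  rw [mul_sum]
  refine Fintype.sum_equiv (Equiv.mulLeft τ) _ _ fun σ => ?_
  simp only [Matrix.submatrix_apply, coe_mulLeft, Perm.mul_apply, Perm.sign_mul, Units.val_mul,
    Int.cast_mul, ← mul_assoc, Int.cast_units_mul_self, one_mul]

theorem pf_eq_sum_pfSummand (A : Matrix (Fin (2 * M)) (Fin (2 * M)) ℝ) :
    pf A = 1 / (2 ^ M * M.factorial : ℝ) *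
      ∑ σ, pfSummand (A.submatrix (finPairEquiv M) (finPairEquiv M)) σ := by
  have h0 (m : Fin M) (h : 2 * (m : ℕ) < 2 * M) : (finPairEquiv M).symm ⟨2 * m, h⟩ = (m, 0) :=
    (Equiv.symm_apply_eq _).2 (Fin.ext (by simp))
  have h1 (m : Fin M) (h : 2 * (m : ℕ) + 1 < 2 * M) :
      (finPairEquiv M).symm ⟨2 * m + 1, h⟩ = (m, 1) :=
    (Equiv.symm_apply_eq _).2 (Fin.ext (by simp))
  rw [pf, ← (permCongr (finPairEquiv M)).sum_comp]
  simp only [pfSummand, sign_permCongr, Matrix.submatrix_apply, permCongr_apply, h0, h1]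

theorem isAlternating_pf_signMatrix :
    IsAlternating fun l : Fin (2 * M) → ℝ => pf (signMatrix l) :=
  fun l τ => pf_submatrix_perm (signMatrix l) τ

theorem pf_signMatrix_of_strictMono {l : Fin (2 * M) → ℝ} (hl : StrictMono l) :
    pf (signMatrix l) = 1 := by
  rw [pf_eq_sum_pfSummand]
  change _ * ∑ σ, pfSummand (signMatrix (l ∘ finPairEquiv M)) σ = 1
  rw [sum_pfSummand_signMatrix (hl.injective.comp (finPairEquiv M).injective), Fintype.card_fin]
  · field_simp
  · exact fun k => hl (Fin.lt_def.2 (by simp))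
  · rintro k ⟨j, i⟩ hjk
    simp only [Function.comp_apply, hl.lt_iff_lt, Fin.lt_def, finPairEquiv_val]
    have : (j : ℕ) ≠ k := Fin.val_ne_of_ne hjk
    omega

end Pfaffian

/-- For `N = 2M` real numbers `λ_1, …, λ_N`,
`Pf [sgn(λ_n - λ_m)]_{m,n} = ∏_{m<n} sgn(λ_n - λ_m)`. -/
theorem stmt1 (M : ℕ) (l : Fin (2*M) → ℝ) :
    pf (Matrix.of fun m n : Fin (2*M) => Real.sign (l n - l m)) =
      ∏ q ∈ Finset.univ.filter (fun q : Fin (2*M) × Fin (2*M) => q.1 < q.2),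
        Real.sign (l q.2 - l q.1) := by
  rw [prod_sign_sub_eq_sign_det_vandermonde]
  refine isAlternating_pf_signMatrix.eq_of_eq_on_strictMono isAlternating_sign_det_vandermonde
    (fun l hl => ?_) l
  rw [pf_signMatrix_of_strictMono hl, ← prod_sign_sub_eq_sign_det_vandermonde]
  exact (prod_eq_one fun q hq => Real.sign_of_pos (sub_pos.2 (hl (mem_filter.1 hq).2))).symm
end

section
/- Hyperpfaffian formula for even-square $\beta$: Let $L$ be even, $N \geq 1$, $\beta = L^2$, and let $\nu$ be a finite Borel measure on $\mathbb{R}$ with all moments finite. Let $(p_n)_{n=1}^{NL}$ be any monic polynomials with $\deg p_n = n-1$, and define the $L$-form $\omega = \sum_{\mathfrak t} \left(\int_{\mathbb R} \mathrm{Wr}(\mathbf p_{\mathfrak t}; x)\, d\nu(x)\right) \epsilon_{\mathfrak t}$, summed over strictly increasing $\mathfrak t:\{1,\ldots,L\}\to\{1,\ldots,NL\}$. Then $\frac{1}{N!}\int_{\mathbb{R}^N} \prod_{m<n}|\lambda_n - \lambda_m|^{L^2}\, d\nu^N(\boldsymbol\lambda) = \mathrm{PF}(\omega)$. -/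
open scoped Classical
open MeasureTheory

/-- The modified `k`-th differentiation operator `D^k f(x) = f^{(k)}(x)/k!`. -/
noncomputable def Dop (k : ℕ) (q : Polynomial ℝ) (x : ℝ) : ℝ :=
  (Polynomial.derivative^[k] q).eval x / (Nat.factorial k : ℝ)

/-- The Wronskian `Wr(p_𝔱; x) = det [D^{ℓ-1} p_{𝔱(n)}(x)]_{n,ℓ=1}^L`. -/
noncomputable def Wr {L n : ℕ} (p : Fin n → Polynomial ℝ) (t : Fin L → Fin n) (x : ℝ) : ℝ :=
  Matrix.det (Matrix.of fun a ℓ : Fin L => Dop ℓ (p (t a)) x)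

/-- The basis vector `e_i` of `ℝ^n` inside the exterior algebra. -/
noncomputable def ee (n : ℕ) (i : Fin n) : ExteriorAlgebra ℝ (Fin n → ℝ) :=
  ExteriorAlgebra.ι ℝ (Pi.single i 1)

/-- `ε_𝔱 = e_{𝔱(1)} ∧ ⋯ ∧ e_{𝔱(L)}`. -/
noncomputable def eps {n L : ℕ} (t : Fin L → Fin n) : ExteriorAlgebra ℝ (Fin n → ℝ) :=
  (List.ofFn fun ℓ => ee n (t ℓ)).prod

/-- The volume form `e_1 ∧ ⋯ ∧ e_n` of `ℝ^n`. -/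
noncomputable def vol (n : ℕ) : ExteriorAlgebra ℝ (Fin n → ℝ) :=
  (List.ofFn fun i => ee n i).prod

/-! For fixed `λ`, the `NL × NL` matrix with rows `(D^ℓ p_i(λ_n))_i`, `n < N`, `ℓ < L`, is a
confluent Vandermonde matrix: since `D^ℓ p(x)` is the `ℓ`-th Taylor coefficient of `p` at `x`, its
determinant does not change if the `p_i` are replaced by the Newton-type basis
`(X - λ_n)^j ∏_{m<n} (X - λ_m)^L`, in which the matrix is lower triangular with determinant
`∏_{m<n} (λ_n - λ_m)^{L²}`. Wedging its rows block by block and expanding each block of `L` rows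
in the basis `ε_𝔱` (Cauchy–Binet) gives
`∏_{m<n} (λ_n - λ_m)^{L²} e_1 ∧ ⋯ ∧ e_{NL} = ω(λ_1) ∧ ⋯ ∧ ω(λ_N)` with
`ω(x) = ∑_𝔱 Wr(p_𝔱; x) ε_𝔱`. The right side is multilinear in the `ω(λ_n)`, so integrating each
variable against `ν` turns it into `ω^{∧N} = N! PF(ω) e_1 ∧ ⋯ ∧ e_{NL}`. -/

open Polynomial

theorem Finset.prod_filter_fst_lt_snd {α β : Type*} [Fintype α] [LinearOrder α]
    [LocallyFiniteOrderBot α] [CommMonoid β] (f : α → α → β) :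
    ∏ q ∈ Finset.univ.filter (fun q : α × α => q.1 < q.2), f q.1 q.2
      = ∏ n, ∏ m ∈ Finset.Iio n, f m n := by
  rw [Finset.prod_filter, Fintype.prod_prod_type, Finset.prod_comm]
  refine Finset.prod_congr rfl fun n _ => ?_
  rw [← Finset.prod_filter]
  congr 1
  ext m
  simp

theorem lt_or_eq_and_lt_of_finProdFinEquiv_lt {m n : ℕ} {a b : Fin m × Fin n}
    (h : finProdFinEquiv a < finProdFinEquiv b) : a.1 < b.1 ∨ a.1 = b.1 ∧ a.2 < b.2 := by
  rw [Fin.lt_def, finProdFinEquiv_apply_val, finProdFinEquiv_apply_val] at h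
  rcases lt_trichotomy a.1 b.1 with h1 | h1 | h1
  · exact Or.inl h1
  · rw [h1] at h ⊢
    exact Or.inr ⟨rfl, by omega⟩
  · have : n * b.1 + n ≤ n * a.1 := by
      rw [← Nat.mul_succ]; exact Nat.mul_le_mul_left n (Fin.lt_def.mp h1)
    omega

theorem Polynomial.taylor_X_sub_C {R : Type*} [CommRing R] (a : R) : taylor a (X - C a) = X := by
  rw [map_sub, taylor_X, taylor_C, add_sub_cancel_right]

theorem Polynomial.taylor_coeff_eq_zero_of_dvd {R : Type*} [CommRing R] {a : R} {q : R[X]}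
    {j ℓ : ℕ} (hdvd : (X - C a) ^ j ∣ q) (hℓ : ℓ < j) : (taylor a q).coeff ℓ = 0 := by
  obtain ⟨g, rfl⟩ := hdvd
  rw [taylor_mul, taylor_pow, taylor_X_sub_C, coeff_X_pow_mul', if_neg (not_le.2 hℓ)]

theorem Polynomial.taylor_X_sub_C_pow_mul_coeff_self {R : Type*} [CommRing R] (a : R) (j : ℕ)
    (g : R[X]) : (taylor a ((X - C a) ^ j * g)).coeff j = g.eval a := by
  rw [taylor_mul, taylor_pow, taylor_X_sub_C, coeff_X_pow_mul', if_pos le_rfl, Nat.sub_self,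
    taylor_coeff_zero]

theorem Matrix.det_of_monic_eq_det_of_X_pow {R : Type*} [CommRing R] {M : ℕ}
    (φ : Fin M → R[X] →ₗ[R] R) (P : Fin M → R[X]) (hmonic : ∀ i, (P i).Monic)
    (hdeg : ∀ i, (P i).natDegree = i) :
    (Matrix.of fun k i => φ k (P i)).det
      = (Matrix.of fun k i : Fin M => φ k (X ^ (i : ℕ))).det := by
  have hfactor : Matrix.of (fun k i => φ k (P i))
      = Matrix.of (fun k j : Fin M => φ k (X ^ (j : ℕ)))
        * Matrix.of fun (j i : Fin M) => (P i).coeff j := by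
    ext k i
    rw [Matrix.of_apply, Matrix.mul_apply, (P i).as_sum_range' M (by rw [hdeg]; exact i.isLt),
      map_sum, ← Fin.sum_univ_eq_sum_range (fun j => φ k (monomial j ((P i).coeff j)))]
    refine Finset.sum_congr rfl fun j _ => ?_
    rw [← C_mul_X_pow_eq_monomial, ← smul_eq_C_mul, map_smul, smul_eq_mul, mul_comm]
    rfl
  rw [hfactor, Matrix.det_mul, Matrix.det_matrixOfPolynomials P hdeg hmonic, mul_one]

theorem Dop_eq_eval_hasseDeriv (k : ℕ) (q : ℝ[X]) (x : ℝ) :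
    Dop k q x = (hasseDeriv k q).eval x := by
  have hk : (k.factorial : ℝ) ≠ 0 := by positivity
  rw [Dop, ← factorial_smul_hasseDeriv, LinearMap.smul_apply, eval_smul, nsmul_eq_mul,
    mul_div_cancel_left₀ _ hk]

/-- A confluent analogue of the Newton basis `∏_{m<n} (X - λ_m)`. -/
noncomputable def confluentNewton {R : Type*} [CommRing R] {N : ℕ} (L : ℕ) (lam : Fin N → R)
    (b : Fin N × Fin L) : R[X] :=
  (X - C (lam b.1)) ^ (b.2 : ℕ) * ∏ m ∈ Finset.Iio b.1, (X - C (lam m)) ^ L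

section confluentNewton

variable {R : Type*} [CommRing R] {N L : ℕ} (lam : Fin N → R)

theorem monic_confluentNewton (b : Fin N × Fin L) : (confluentNewton L lam b).Monic :=
  ((monic_X_sub_C _).pow _).mul (monic_prod_of_monic _ _ fun _ _ => (monic_X_sub_C _).pow L)

theorem natDegree_confluentNewton [Nontrivial R] (b : Fin N × Fin L) :
    (confluentNewton L lam b).natDegree = finProdFinEquiv b := by
  rw [confluentNewton, ((monic_X_sub_C _).pow _).natDegree_mul
      (monic_prod_of_monic _ _ fun _ _ => (monic_X_sub_C _).pow L),
    natDegree_prod_of_monic _ _ fun _ _ => (monic_X_sub_C _).pow L]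
  simp [(monic_X_sub_C _).natDegree_pow, finProdFinEquiv_apply_val, mul_comm]

theorem taylor_confluentNewton_coeff_of_lt {a b : Fin N × Fin L}
    (hab : finProdFinEquiv a < finProdFinEquiv b) :
    (taylor (lam a.1) (confluentNewton L lam b)).coeff a.2 = 0 := by
  rcases lt_or_eq_and_lt_of_finProdFinEquiv_lt hab with hlt | ⟨heq, hlt⟩
  · refine taylor_coeff_eq_zero_of_dvd (dvd_mul_of_dvd_right ?_ _) a.2.isLt
    exact Finset.dvd_prod_of_mem _ (Finset.mem_Iio.2 hlt)
  · rw [heq]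
    exact taylor_coeff_eq_zero_of_dvd (dvd_mul_right _ _) hlt

theorem taylor_confluentNewton_coeff_self (b : Fin N × Fin L) :
    (taylor (lam b.1) (confluentNewton L lam b)).coeff b.2
      = ∏ m ∈ Finset.Iio b.1, (lam b.1 - lam m) ^ L := by
  rw [confluentNewton, taylor_X_sub_C_pow_mul_coeff_self]
  simp [eval_prod]

end confluentNewton

theorem det_Dop_eq_prod_sub_pow {N L : ℕ} (lam : Fin N → ℝ) (P : Fin (N * L) → ℝ[X])
    (hmonic : ∀ i, (P i).Monic) (hdeg : ∀ i, (P i).natDegree = i) :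
    (Matrix.of fun k i : Fin (N * L) =>
        Dop (finProdFinEquiv.symm k).2 (P i) (lam (finProdFinEquiv.symm k).1)).det
      = ∏ q ∈ Finset.univ.filter (fun q : Fin N × Fin N => q.1 < q.2),
          (lam q.2 - lam q.1) ^ (L * L) := by
  set e : Fin N × Fin L ≃ Fin (N * L) := finProdFinEquiv
  let φ : Fin (N * L) → ℝ[X] →ₗ[ℝ] ℝ := fun k =>
    (lcoeff ℝ (e.symm k).2).comp (taylor (lam (e.symm k).1))
  have hφ : ∀ k q, Dop (e.symm k).2 q (lam (e.symm k).1) = φ k q := fun k q => by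
    rw [Dop_eq_eval_hasseDeriv, ← taylor_coeff]; rfl
  have hlower : (Matrix.of fun k i => φ k (confluentNewton L lam (e.symm i))).BlockTriangular
      OrderDual.toDual := fun k i hki =>
    taylor_confluentNewton_coeff_of_lt lam (by rwa [e.apply_symm_apply, e.apply_symm_apply])
  simp only [hφ]
  rw [Matrix.det_of_monic_eq_det_of_X_pow φ P hmonic hdeg,
    ← Matrix.det_of_monic_eq_det_of_X_pow φ _ (fun i => monic_confluentNewton lam _)
      (fun i => by rw [natDegree_confluentNewton, e.apply_symm_apply]),
    Matrix.det_of_isLowerTriangular _ hlower]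
  calc ∏ k, φ k (confluentNewton L lam (e.symm k))
      = ∏ b : Fin N × Fin L, ∏ m ∈ Finset.Iio b.1, (lam b.1 - lam m) ^ L := by
        simp only [φ, LinearMap.comp_apply, lcoeff_apply, taylor_confluentNewton_coeff_self]
        exact e.symm.prod_comp fun b => ∏ m ∈ Finset.Iio b.1, (lam b.1 - lam m) ^ L
    _ = ∏ n, ∏ m ∈ Finset.Iio n, (lam n - lam m) ^ (L * L) := by
        simp [Fintype.prod_prod_type, Finset.prod_pow, pow_mul]
    _ = _ := (Finset.prod_filter_fst_lt_snd fun m n => (lam n - lam m) ^ (L * L)).symm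

theorem Wr_eq_eval_det {L n : ℕ} (p : Fin n → ℝ[X]) (t : Fin L → Fin n) (x : ℝ) :
    Wr p t x = (Matrix.of fun a ℓ : Fin L => hasseDeriv ℓ (p (t a))).det.eval x := by
  rw [Wr, ← coe_evalRingHom, RingHom.map_det]
  congr 1
  ext a ℓ
  simp [Dop_eq_eval_hasseDeriv]

theorem Polynomial.integrable_eval {ν : Measure ℝ} (hmom : ∀ k : ℕ, Integrable (fun x => x ^ k) ν)
    (q : ℝ[X]) : Integrable (fun x => q.eval x) ν := by
  simp_rw [eval_eq_sum_range]
  exact integrable_finsetSum _ fun i _ => (hmom i).const_mul _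

theorem integrable_Wr {L n : ℕ} {ν : Measure ℝ} (hmom : ∀ k : ℕ, Integrable (fun x => x ^ k) ν)
    (p : Fin n → ℝ[X]) (t : Fin L → Fin n) : Integrable (Wr p t) ν := by
  rw [funext (Wr_eq_eval_det p t)]
  exact integrable_eval hmom _

theorem ExteriorAlgebra.ιMulti_eq_sum_strictMono {R : Type*} [CommRing R] {L M : ℕ}
    (u : Fin L → Fin M → R) :
    ιMulti R L u = ∑ t ∈ Finset.univ.filter (fun t : Fin L → Fin M => StrictMono t),
      (Matrix.of fun ℓ a => u ℓ (t a)).det • ιMulti R L (fun ℓ => Pi.single (t ℓ) 1) := by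
  set B := (Pi.basisFun R (Fin M)).exteriorPower L
  have h := congrArg Subtype.val (B.sum_repr (exteriorPower.ιMulti R L u))
  rw [exteriorPower.ιMulti_apply_coe] at h
  rw [← h, Submodule.coe_sum]
  refine Finset.sum_bij' (fun s _ => ⇑(Set.powersetCard.ofFinEmbEquiv.symm s))
    (fun t ht => Set.powersetCard.ofFinEmbEquiv
      (OrderEmbedding.ofStrictMono t (Finset.mem_filter.mp ht).2))
    (fun s _ => by simpa using (Set.powersetCard.ofFinEmbEquiv.symm s).strictMono) (by simp)
    (fun s _ => Set.powersetCard.ofFinEmbEquiv.apply_symm_apply s) (fun t _ => by ext; simp)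
    (fun s _ => ?_)
  rw [Submodule.coe_smul, exteriorPower.basis_repr_apply, exteriorPower.ιMultiDual_apply_ιMulti,
    exteriorPower.basis_apply, exteriorPower.ιMulti_family_apply_coe]
  simp only [Module.Basis.coord_apply, Pi.basisFun_repr, ExteriorAlgebra.ιMulti_family,
    Function.comp_def, Pi.basisFun_apply]

theorem ExteriorAlgebra.ιMulti_eq_det_smul {R : Type*} [CommRing R] {M : ℕ}
    (u : Fin M → Fin M → R) :
    ιMulti R M u = (Matrix.of u).det • ιMulti R M (fun i => Pi.single i 1) := by
  have hid : Finset.univ.filter (fun t : Fin M → Fin M => StrictMono t) = {id} := by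
    ext t
    simpa using ⟨StrictMono.eq_id, fun h => h ▸ strictMono_id⟩
  rw [ιMulti_eq_sum_strictMono, hid, Finset.sum_singleton]
  rfl

theorem ExteriorAlgebra.ιMulti_finProdFinEquiv {R M : Type*} [CommRing R] [AddCommGroup M]
    [Module R M] {N L : ℕ} (u : Fin (N * L) → M) :
    ιMulti R (N * L) u
      = (List.ofFn fun n => ιMulti R L fun ℓ => u (finProdFinEquiv (n, ℓ))).prod := by
  simp only [ιMulti_apply]
  rw [List.ofFn_mul, List.prod_flatten, List.map_ofFn]
  congr 2
  funext n
  simp only [Function.comp_apply]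
  congr 4
  funext ℓ
  congr 2
  ext
  simp [finProdFinEquiv_apply_val, mul_comm, add_comm]

theorem eps_eq_ιMulti {n L : ℕ} (t : Fin L → Fin n) :
    eps t = ExteriorAlgebra.ιMulti ℝ L (fun ℓ => Pi.single (t ℓ) 1) := by
  rw [ExteriorAlgebra.ιMulti_apply]; rfl

theorem vol_eq_ιMulti (n : ℕ) :
    vol n = ExteriorAlgebra.ιMulti ℝ n (fun i => Pi.single i 1) := by
  rw [ExteriorAlgebra.ιMulti_apply]; rfl

noncomputable def volCoeff (M : ℕ) : ExteriorAlgebra ℝ (Fin M → ℝ) →ₗ[ℝ] ℝ :=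
  ExteriorAlgebra.liftAlternating
    (Function.update (fun i => (0 : (Fin M → ℝ) [⋀^Fin i]→ₗ[ℝ] ℝ)) M (Pi.basisFun ℝ (Fin M)).det)

theorem volCoeff_vol (M : ℕ) : volCoeff M (vol M) = 1 := by
  have hbasis : (fun i => Pi.single i (1 : ℝ)) = ⇑(Pi.basisFun ℝ (Fin M)) := by
    ext; simp
  rw [vol_eq_ιMulti, volCoeff, ExteriorAlgebra.liftAlternating_apply_ιMulti,
    Function.update_self, hbasis, Module.Basis.det_self]

theorem integral_multilinearMap_sum_smul {κ ι V : Type*} [Fintype κ] [AddCommMonoid V]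
    [Module ℝ V] (Φ : MultilinearMap ℝ (fun _ : κ => V) ℝ) (ν : Measure ℝ) [SigmaFinite ν]
    (s : Finset ι) (w : ι → ℝ → ℝ) (hw : ∀ t ∈ s, Integrable (w t) ν) (v : ι → V) :
    ∫ x : κ → ℝ, Φ (fun n => ∑ t ∈ s, w t (x n) • v t) ∂Measure.pi (fun _ => ν)
      = Φ (fun _ => ∑ t ∈ s, (∫ y, w t y ∂ν) • v t) := by
  simp only [Φ.map_sum_finset, Φ.map_smul_univ, smul_eq_mul]
  rw [integral_finsetSum]
  · refine Finset.sum_congr rfl fun r _ => ?_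
    rw [integral_mul_const, integral_fintype_prod_eq_prod (fun n y => w (r n) y)]
  · intro r hr
    exact (Integrable.fintype_prod fun n => hw (r n) (Fintype.mem_piFinset.1 hr n)).mul_const _

theorem prod_pow_smul_vol_eq_prod_sum {N L : ℕ} (p : Fin (N * L) → ℝ[X])
    (hmonic : ∀ i, (p i).Monic) (hdeg : ∀ i, (p i).natDegree = i) (lam : Fin N → ℝ) :
    (∏ q ∈ Finset.univ.filter (fun q : Fin N × Fin N => q.1 < q.2), (lam q.2 - lam q.1) ^ (L * L))
        • vol (N * L)
      = (List.ofFn fun n => ∑ t ∈ Finset.univ.filter (fun t : Fin L → Fin (N * L) => StrictMono t),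
          Wr p t (lam n) • eps t).prod := by
  rw [← det_Dop_eq_prod_sub_pow lam p hmonic hdeg, vol_eq_ιMulti,
    ← ExteriorAlgebra.ιMulti_eq_det_smul, ExteriorAlgebra.ιMulti_finProdFinEquiv]
  congr 2
  funext n
  rw [ExteriorAlgebra.ιMulti_eq_sum_strictMono]
  refine Finset.sum_congr rfl fun t _ => ?_
  rw [eps_eq_ιMulti, Wr, ← Matrix.det_transpose]
  simp only [Equiv.symm_apply_apply]
  rfl

theorem stmt7_general (L N : ℕ) (hL : Even L)
    (ν : Measure ℝ) [IsFiniteMeasure ν]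
    (hmom : ∀ k : ℕ, Integrable (fun x => x ^ k) ν)
    (p : Fin (N*L) → Polynomial ℝ)
    (hmonic : ∀ i, (p i).Monic) (hdeg : ∀ i, (p i).natDegree = (i : ℕ))
    (c : ℝ)
    (hc : (∑ t ∈ Finset.univ.filter (fun t : Fin L → Fin (N*L) => StrictMono t),
        (∫ x, Wr p t x ∂ν) • eps t) ^ N
      = ((Nat.factorial N : ℝ) * c) • vol (N*L)) :
    (1 / (Nat.factorial N : ℝ)) *
      ∫ l : Fin N → ℝ,
        (∏ q ∈ Finset.univ.filter (fun q : Fin N × Fin N => q.1 < q.2),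
          |l q.2 - l q.1| ^ (L^2)) ∂(Measure.pi fun _ => ν) = c := by
  set S := Finset.univ.filter (fun t : Fin L → Fin (N * L) => StrictMono t)
  let Φ := (volCoeff (N * L)).compMultilinearMap
    (MultilinearMap.mkPiAlgebraFin ℝ N (ExteriorAlgebra ℝ (Fin (N * L) → ℝ)))
  have hintegrand : ∀ l : Fin N → ℝ,
      ∏ q ∈ Finset.univ.filter (fun q : Fin N × Fin N => q.1 < q.2), |l q.2 - l q.1| ^ (L ^ 2)
        = Φ fun n => ∑ t ∈ S, Wr p t (l n) • eps t := fun l => by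
    rw [LinearMap.compMultilinearMap_apply, MultilinearMap.mkPiAlgebraFin_apply,
      ← prod_pow_smul_vol_eq_prod_sum p hmonic hdeg, map_smul, volCoeff_vol, smul_eq_mul, mul_one]
    exact Finset.prod_congr rfl fun q _ => by rw [sq, (hL.mul_right L).pow_abs]
  have hpow : (Φ fun _ => ∑ t ∈ S, (∫ x, Wr p t x ∂ν) • eps t) = N.factorial * c := by
    rw [LinearMap.compMultilinearMap_apply, MultilinearMap.mkPiAlgebraFin_apply_const, hc,
      map_smul, volCoeff_vol, smul_eq_mul, mul_one]
  simp_rw [hintegrand]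
  rw [integral_multilinearMap_sum_smul Φ ν S _ (fun t _ => integrable_Wr hmom p t), hpow]
  field_simp

/-- hyperpfaffian formula for even square `β = L²`: if `L` is even and
`ω = ∑_𝔱 (∫ Wr(p_𝔱; x) dν(x)) ε_𝔱` (sum over strictly increasing `𝔱 : {1,…,L} → {1,…,NL}`),
then `Z_N = (1/N!) ∫_{ℝ^N} ∏_{m<n} |λ_n - λ_m|^{L²} dν^N(λ) = PF(ω)`,
where `PF(ω)` is defined by `ω^{∧N}/N! = PF(ω) ε_Vol`. -/
theorem stmt7 (L N : ℕ) (hL : Even L) (hL0 : 0 < L) (hN : 1 ≤ N)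
    (ν : Measure ℝ) [IsFiniteMeasure ν]
    (hmom : ∀ k : ℕ, Integrable (fun x => x ^ k) ν)
    (p : Fin (N*L) → Polynomial ℝ)
    (hmonic : ∀ i, (p i).Monic) (hdeg : ∀ i, (p i).natDegree = (i : ℕ))
    (c : ℝ)
    (hc : (∑ t ∈ Finset.univ.filter (fun t : Fin L → Fin (N*L) => StrictMono t),
        (∫ x, Wr p t x ∂ν) • eps t) ^ N
      = ((Nat.factorial N : ℝ) * c) • vol (N*L)) :
    (1 / (Nat.factorial N : ℝ)) *
      ∫ l : Fin N → ℝ,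
        (∏ q ∈ Finset.univ.filter (fun q : Fin N × Fin N => q.1 < q.2),
          |l q.2 - l q.1| ^ (L^2)) ∂(Measure.pi fun _ => ν) = c :=
  stmt7_general L N hL ν hmom p hmonic hdeg c hc
end

section
/- Decomposition of interleaving tuples: Let $L, M \geq 1$ and $N = 2M$. Every $N$-tuple $(\mathfrak u_1,\ldots,\mathfrak u_N)$ of strictly increasing functions $\{1,\ldots,L\}\to\{1,\ldots,NL\}$ with pairwise disjoint ranges covering $\{1,\ldots,NL\}$ can be written uniquely as $\mathfrak u_{2m-1} = \mathfrak v_m\circ\mathfrak w_m$ and $\mathfrak u_{2m} = \mathfrak v_m\circ\mathfrak w_m'$ for $m = 1,\ldots,M$, where $(\mathfrak v_1,\ldots,\mathfrak v_M)$ are strictly increasing functions $\{1,\ldots,2L\}\to\{1,\ldots,2LM\}$ with pairwise disjoint ranges covering $\{1,\ldots,2LM\}$, each $\mathfrak w_m$ is a strictly increasing function $\{1,\ldots,L\}\to\{1,\ldots,2L\}$, and $\mathfrak w_m'$ is the unique strictly increasing function $\{1,\ldots,L\}\to\{1,\ldots,2L\}$ whose range is the complement of the range of $\mathfrak w_m$.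 Moreover, $\mathrm{sgn}(\mathfrak u_1,\ldots,\mathfrak u_N) = \mathrm{sgn}(\mathfrak v_1,\ldots,\mathfrak v_M)\prod_{m=1}^M \mathrm{sgn}\,\mathfrak w_m$. -/
open scoped Classical

/-- The concatenation `(𝔱_1(1), …, 𝔱_1(L), 𝔱_2(1), …, 𝔱_N(L))` of a tuple of functions,
as a map `Fin (N*L) → Fin n`. -/
def concatMap {N L n : ℕ} (hL : 0 < L) (T : Fin N → Fin L → Fin n) (i : Fin (N*L)) : Fin n :=
  T ⟨(i:ℕ)/L, Nat.div_lt_of_lt_mul (Nat.lt_of_lt_of_le i.isLt (Nat.le_of_eq (Nat.mul_comm N L)))⟩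
    ⟨(i:ℕ) % L, Nat.mod_lt _ hL⟩

/-- The sign `sgn(𝔱_1, …, 𝔱_N)` defined by
`ε_{𝔱_1} ∧ ⋯ ∧ ε_{𝔱_N} = sgn(𝔱_1, …, 𝔱_N) ε_Vol`; equivalently, the sign of the
permutation sending `(1, …, NL)` to `(𝔱_1(1), …, 𝔱_N(L))` when the ranges of the `𝔱`'s
partition the index set, and `0` otherwise. -/
noncomputable def tupleSign {N L n : ℕ} (hL : 0 < L) (T : Fin N → Fin L → Fin n) : ℝ :=
  if hb : Function.Bijective (concatMap hL T) then
    ((Equiv.Perm.sign ((Equiv.ofBijective _ hb).trans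
        (finCongr (show n = N * L by
          simpa using (Fintype.card_congr (Equiv.ofBijective _ hb)).symm))) : ℤ) : ℝ)
  else 0

/-! The blocks are forced: `𝔳_m` must enumerate `range 𝔲_{2m-1} ∪ range 𝔲_{2m}` increasingly, and
`𝔴_m`, `𝔴_m'` record where the two ranges sit inside it. For the sign, the concatenation of the
`𝔲`'s equals that of the `𝔳`'s precomposed with the block-diagonal permutation whose `m`-th block
is the concatenation of `𝔴_m, 𝔴_m'`, and a block-diagonal permutation has the product of the
signs of its blocks as its sign. -/

open Function Set

lemma Nat.mul_add_lt_mul {K M m b : ℕ} (hm : m < M) (hb : b < K) : K * m + b < K * M :=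
  calc K * m + b < K * m + K := by omega
    _ = K * (m + 1) := by ring
    _ ≤ K * M := Nat.mul_le_mul_left K hm

section Concat

variable {N K M L n : ℕ}

lemma concatMap_apply_of_val_eq (hL : 0 < L) (T : Fin N → Fin L → Fin n) {i : Fin (N * L)}
    {k : Fin N} {r : Fin L} (h : (i : ℕ) = k * L + r) : concatMap hL T i = T k r := by
  have hdiv : (i : ℕ) / L = k := by
    rw [h, Nat.mul_comm, Nat.mul_add_div hL, Nat.div_eq_of_lt r.isLt, Nat.add_zero]
  have hmod : (i : ℕ) % L = r := by
    rw [h, Nat.add_comm, Nat.add_mul_mod_self_right, Nat.mod_eq_of_lt r.isLt]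
  exact congr (congrArg T (Fin.ext hdiv)) (Fin.ext hmod)

@[simp]
lemma concatMap_finProdFinEquiv (hL : 0 < L) (T : Fin N → Fin L → Fin n) (k : Fin N)
    (r : Fin L) : concatMap hL T (finProdFinEquiv (k, r)) = T k r :=
  concatMap_apply_of_val_eq hL T (by simp only [finProdFinEquiv_apply_val]; ring)

lemma disjoint_range_of_injective_concatMap (hL : 0 < L) (T : Fin N → Fin L → Fin n)
    (hT : Injective (concatMap hL T)) {k k' : Fin N} (hk : k ≠ k') :
    Disjoint (range (T k)) (range (T k')) := by
  rw [Set.disjoint_left]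
  rintro _ ⟨r, rfl⟩ ⟨r', hr'⟩
  have := hT (a₁ := finProdFinEquiv (k', r')) (a₂ := finProdFinEquiv (k, r)) (by simpa using hr')
  exact hk (congrArg Prod.fst (finProdFinEquiv.injective this)).symm

lemma concatMap_assoc (hL : 0 < L) (hKL : 0 < K * L) (U : Fin (K * M) → Fin L → Fin n) :
    concatMap hL U ∘ finCongr (by ring : M * (K * L) = K * M * L) =
      concatMap hKL fun m =>
        concatMap hL fun b => U ⟨K * m + b, Nat.mul_add_lt_mul m.isLt b.isLt⟩ := by
  ext j
  obtain ⟨⟨m, x⟩, rfl⟩ := finProdFinEquiv.surjective j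
  obtain ⟨⟨b, s⟩, rfl⟩ := finProdFinEquiv.surjective x
  simp only [comp_apply, concatMap_finProdFinEquiv]
  rw [concatMap_apply_of_val_eq hL U (k := ⟨K * m + b, Nat.mul_add_lt_mul m.isLt b.isLt⟩)]
  simp only [finCongr_apply, Fin.val_cast, finProdFinEquiv_apply_val]
  ring

def blockPerm (σ : Fin N → Equiv.Perm (Fin L)) : Equiv.Perm (Fin (N * L)) :=
  finProdFinEquiv.permCongr (Equiv.prodCongrRight σ)

lemma blockPerm_finProdFinEquiv (σ : Fin N → Equiv.Perm (Fin L)) (k : Fin N) (r : Fin L) :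
    blockPerm σ (finProdFinEquiv (k, r)) = finProdFinEquiv (k, σ k r) := by
  simp [blockPerm, Equiv.permCongr_apply]

lemma sign_blockPerm (σ : Fin N → Equiv.Perm (Fin L)) :
    Equiv.Perm.sign (blockPerm σ) = ∏ k, Equiv.Perm.sign (σ k) := by
  rw [blockPerm, Equiv.Perm.sign_permCongr, Equiv.Perm.sign_prodCongrRight]

lemma concatMap_comp_blockPerm (hL : 0 < L) (T : Fin N → Fin L → Fin n)
    (σ : Fin N → Equiv.Perm (Fin L)) :
    concatMap hL T ∘ blockPerm σ = concatMap hL fun k => T k ∘ σ k := by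
  ext j
  obtain ⟨⟨k, r⟩, rfl⟩ := finProdFinEquiv.surjective j
  simp [blockPerm_finProdFinEquiv]

end Concat

section Sign

variable {N K M L : ℕ}

lemma tupleSign_eq_sign {n : ℕ} (hL : 0 < L) (T : Fin N → Fin L → Fin n)
    (hT : Bijective (concatMap hL T)) (h : n = N * L) :
    tupleSign hL T = ((Equiv.Perm.sign ((Equiv.ofBijective _ hT).trans (finCongr h)) : ℤ) : ℝ) :=
  dif_pos hT

lemma tupleSign_eq_sign_ofBijective (hL : 0 < L) (T : Fin N → Fin L → Fin (N * L))
    (hT : Bijective (concatMap hL T)) :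
    tupleSign hL T = ((Equiv.Perm.sign (Equiv.ofBijective _ hT) : ℤ) : ℝ) := by
  rw [tupleSign_eq_sign hL T hT rfl, finCongr_refl, Equiv.trans_refl]

variable (hL : 0 < L) (hKL : 0 < K * L)

lemma concatMap_comp_finCongr_eq_blockPerm {n : ℕ} (U : Fin (K * M) → Fin L → Fin n)
    (V : Fin M → Fin (K * L) → Fin n) (W : Fin M → Fin K → Fin L → Fin (K * L))
    (hW : ∀ m, Bijective (concatMap hL (W m)))
    (hUVW : ∀ (m : Fin M) (b : Fin K),
      U ⟨K * m + b, Nat.mul_add_lt_mul m.isLt b.isLt⟩ = V m ∘ W m b) :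
    concatMap hL U ∘ finCongr (by ring : M * (K * L) = K * M * L) =
      concatMap hKL V ∘ blockPerm fun m => Equiv.ofBijective _ (hW m) := by
  rw [concatMap_assoc hL hKL, concatMap_comp_blockPerm]
  simp only [hUVW, Equiv.coe_ofBijective]
  rfl

lemma bijective_concatMap_of_comp {n : ℕ} (U : Fin (K * M) → Fin L → Fin n)
    (V : Fin M → Fin (K * L) → Fin n) (W : Fin M → Fin K → Fin L → Fin (K * L))
    (hW : ∀ m, Bijective (concatMap hL (W m))) (hU : Bijective (concatMap hL U))
    (hUVW : ∀ (m : Fin M) (b : Fin K),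
      U ⟨K * m + b, Nat.mul_add_lt_mul m.isLt b.isLt⟩ = V m ∘ W m b) :
    Bijective (concatMap hKL V) := by
  rw [← (Equiv.bijective _).of_comp_iff,
    ← concatMap_comp_finCongr_eq_blockPerm hL hKL U V W hW hUVW]
  exact hU.comp (Equiv.bijective _)

theorem tupleSign_eq_mul_prod_of_comp (U : Fin (K * M) → Fin L → Fin (K * M * L))
    (V : Fin M → Fin (K * L) → Fin (K * M * L)) (W : Fin M → Fin K → Fin L → Fin (K * L))
    (hW : ∀ m, Bijective (concatMap hL (W m))) (hU : Bijective (concatMap hL U))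
    (hUVW : ∀ (m : Fin M) (b : Fin K),
      U ⟨K * m + b, Nat.mul_add_lt_mul m.isLt b.isLt⟩ = V m ∘ W m b) :
    tupleSign hL U = tupleSign hKL V * ∏ m, tupleSign hL (W m) := by
  have hV := bijective_concatMap_of_comp hL hKL U V W hW hU hUVW
  have h := concatMap_comp_finCongr_eq_blockPerm hL hKL U V W hW hUVW
  have hperm : Equiv.ofBijective _ hU = (finCongr (by ring : M * (K * L) = K * M * L)).permCongr
      ((blockPerm fun m => Equiv.ofBijective _ (hW m)).trans
        ((Equiv.ofBijective _ hV).trans (finCongr (by ring : K * M * L = M * (K * L))))) := by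
    ext i : 1
    have hi := congrFun h (Fin.cast (by ring) i)
    rw [comp_apply, comp_apply, finCongr_apply, Fin.cast_cast, Fin.cast_eq_self] at hi
    simpa [Equiv.permCongr_apply] using hi
  rw [tupleSign_eq_sign_ofBijective hL U hU, hperm, Equiv.Perm.sign_permCongr,
    ← Equiv.Perm.mul_def, map_mul, sign_blockPerm, tupleSign_eq_sign hKL V hV (by ring)]
  simp only [tupleSign_eq_sign_ofBijective hL _ (hW _)]
  push_cast
  rfl

end Sign

section Pair

variable {M L n : ℕ}

lemma bijective_concatMap_pair (hL : 0 < L) {w w' : Fin L → Fin (2 * L)}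
    (h : range w' = (range w)ᶜ) : Bijective (concatMap hL ![w, w']) := by
  refine Finite.surjective_iff_bijective.mp fun y => ?_
  by_cases hy : y ∈ range w
  · obtain ⟨r, rfl⟩ := hy
    exact ⟨finProdFinEquiv (0, r), by simp⟩
  · obtain ⟨r, rfl⟩ : y ∈ range w' := h ▸ hy
    exact ⟨finProdFinEquiv (1, r), by simp⟩

lemma block_eq_comp_of_pair {U : Fin (2 * M) → Fin L → Fin n} {V : Fin M → Fin (2 * L) → Fin n}
    {w w' : Fin L → Fin (2 * L)} {m : Fin M}
    (h : U ⟨2 * m, by have := m.isLt; omega⟩ = V m ∘ w ∧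
      U ⟨2 * m + 1, by have := m.isLt; omega⟩ = V m ∘ w') (b : Fin 2) :
    U ⟨2 * m + b, Nat.mul_add_lt_mul m.isLt b.isLt⟩ = V m ∘ ![w, w'] b := by
  fin_cases b
  exacts [h.1, h.2]

end Pair

section Shuffle

variable {α β γ : Type*}

lemma range_eq_range_comp_union_of_range_eq_compl {v : β → α} {w w' : γ → β}
    (h : range w' = (range w)ᶜ) : range v = range (v ∘ w) ∪ range (v ∘ w') := by
  rw [range_comp, range_comp, ← image_union, h, union_compl_self, image_univ]

lemma range_eq_compl_of_injective {v : β → α} (hv : Injective v) {w w' : γ → β}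
    (hdisj : Disjoint (range (v ∘ w)) (range (v ∘ w')))
    (hcover : range v ⊆ range (v ∘ w) ∪ range (v ∘ w')) : range w' = (range w)ᶜ := by
  rw [range_comp, range_comp, disjoint_image_iff hv] at hdisj
  rw [range_comp, range_comp, ← image_union, ← image_univ, image_subset_image_iff hv] at hcover
  exact (IsCompl.compl_eq ⟨hdisj, codisjoint_iff_le_sup.2 hcover⟩).symm

variable [LinearOrder α] {L : ℕ}

structure IsShuffleFactorization (u u' : Fin L → α) (v : Fin (2 * L) → α)
    (w w' : Fin L → Fin (2 * L)) : Prop where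
  strictMono : StrictMono v
  strictMono_left : StrictMono w
  strictMono_right : StrictMono w'
  range_right : range w' = (range w)ᶜ
  eq_left : u = v ∘ w
  eq_right : u' = v ∘ w'

lemma exists_isShuffleFactorization {u u' : Fin L → α} (hu : StrictMono u)
    (hu' : StrictMono u') (hdisj : Disjoint (range u) (range u')) :
    ∃ v w w', IsShuffleFactorization u u' v w w' := by
  classical
  set S := Finset.univ.image u ∪ Finset.univ.image u'
  have hS_coe : (S : Set α) = range u ∪ range u' := by simp [S]
  have hS : S.card = 2 * L := by
    rw [Finset.card_union_of_disjoint (by simpa [← Finset.disjoint_coe] using hdisj),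
      Finset.card_image_of_injective _ hu.injective,
      Finset.card_image_of_injective _ hu'.injective, Finset.card_univ, Fintype.card_fin]
    ring
  let e := S.orderIsoOfFin hS
  have hmem : ∀ r, u r ∈ S ∧ u' r ∈ S := fun r => by simp [S]
  have he : ∀ x : S, S.orderEmbOfFin hS (e.symm x) = x := fun x => by
    rw [← Finset.coe_orderIsoOfFin_apply, OrderIso.apply_symm_apply]
  have hl : u = S.orderEmbOfFin hS ∘ fun r => e.symm ⟨u r, (hmem r).1⟩ :=
    funext fun r => (he ⟨u r, (hmem r).1⟩).symm
  have hr : u' = S.orderEmbOfFin hS ∘ fun r => e.symm ⟨u' r, (hmem r).2⟩ :=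
    funext fun r => (he ⟨u' r, (hmem r).2⟩).symm
  refine ⟨S.orderEmbOfFin hS, fun r => e.symm ⟨u r, (hmem r).1⟩, fun r => e.symm ⟨u' r, (hmem r).2⟩,
    (S.orderEmbOfFin hS).strictMono, e.symm.strictMono.comp fun _ _ h => hu h,
    e.symm.strictMono.comp fun _ _ h => hu' h, ?_, hl, hr⟩
  refine range_eq_compl_of_injective (S.orderEmbOfFin hS).injective (hl ▸ hr ▸ hdisj) ?_
  rw [← hl, ← hr, Finset.range_orderEmbOfFin, hS_coe]

lemma IsShuffleFactorization.unique {u u' : Fin L → α} {v₁ v₂ : Fin (2 * L) → α}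
    {w₁ w₁' w₂ w₂' : Fin L → Fin (2 * L)} (h₁ : IsShuffleFactorization u u' v₁ w₁ w₁')
    (h₂ : IsShuffleFactorization u u' v₂ w₂ w₂') : v₁ = v₂ ∧ w₁ = w₂ ∧ w₁' = w₂' := by
  have hv : v₁ = v₂ := by
    rw [← h₁.strictMono.range_inj h₂.strictMono,
      range_eq_range_comp_union_of_range_eq_compl h₁.range_right,
      range_eq_range_comp_union_of_range_eq_compl h₂.range_right,
      ← h₁.eq_left, ← h₁.eq_right, ← h₂.eq_left, ← h₂.eq_right]
  subst hv
  have hinj := h₁.strictMono.injective.comp_left (α := Fin L)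
  exact ⟨rfl, hinj (h₁.eq_left.symm.trans h₂.eq_left), hinj (h₁.eq_right.symm.trans h₂.eq_right)⟩

end Shuffle

/-- decomposition of interleaving tuples: every `2M`-tuple
`(𝔲_1, …, 𝔲_{2M})` of strictly increasing maps `{1,…,L} → {1,…,2ML}` with pairwise
disjoint ranges covering the index set is uniquely of the form
`𝔲_{2m-1} = 𝔳_m ∘ 𝔴_m`, `𝔲_{2m} = 𝔳_m ∘ 𝔴_m'`, with the `𝔳`'s strictly increasing with
disjoint ranges covering the index set, the `𝔴`'s strictly increasing
`{1,…,L} → {1,…,2L}` and `𝔴'` the strictly increasing map with complementary range;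
moreover `sgn(𝔲_1, …, 𝔲_{2M}) = sgn(𝔳_1, …, 𝔳_M) ∏_m sgn 𝔴_m`. -/
theorem stmt19 (L M : ℕ) (hL : 0 < L)
    (U : Fin (2*M) → Fin L → Fin ((2*M)*L))
    (hU : ∀ m, StrictMono (U m))
    (hbij : Function.Bijective (concatMap hL U)) :
    (∃! vw : (Fin M → Fin (2*L) → Fin ((2*M)*L)) ×
        (Fin M → Fin L → Fin (2*L)) × (Fin M → Fin L → Fin (2*L)),
      (∀ m, StrictMono (vw.1 m)) ∧
      Function.Bijective (concatMap (by omega : 0 < 2*L) vw.1) ∧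
      (∀ m, StrictMono (vw.2.1 m)) ∧ (∀ m, StrictMono (vw.2.2 m)) ∧
      (∀ m, Set.range (vw.2.2 m) = (Set.range (vw.2.1 m))ᶜ) ∧
      (∀ m : Fin M,
        U ⟨2*(m:ℕ), by have := m.isLt; omega⟩ = vw.1 m ∘ vw.2.1 m ∧
        U ⟨2*(m:ℕ)+1, by have := m.isLt; omega⟩ = vw.1 m ∘ vw.2.2 m)) ∧
    (∀ vw : (Fin M → Fin (2*L) → Fin ((2*M)*L)) ×
        (Fin M → Fin L → Fin (2*L)) × (Fin M → Fin L → Fin (2*L)),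
      ((∀ m, StrictMono (vw.1 m)) ∧
       Function.Bijective (concatMap (by omega : 0 < 2*L) vw.1) ∧
       (∀ m, StrictMono (vw.2.1 m)) ∧ (∀ m, StrictMono (vw.2.2 m)) ∧
       (∀ m, Set.range (vw.2.2 m) = (Set.range (vw.2.1 m))ᶜ) ∧
       (∀ m : Fin M,
         U ⟨2*(m:ℕ), by have := m.isLt; omega⟩ = vw.1 m ∘ vw.2.1 m ∧
         U ⟨2*(m:ℕ)+1, by have := m.isLt; omega⟩ = vw.1 m ∘ vw.2.2 m)) →
      tupleSign hL U =
        tupleSign (by omega : 0 < 2*L) vw.1 *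
          ∏ m : Fin M, tupleSign hL ![vw.2.1 m, vw.2.2 m]) := by
  have hdisj : ∀ m : Fin M, Disjoint (range (U ⟨2 * m, by have := m.isLt; omega⟩))
      (range (U ⟨2 * m + 1, by have := m.isLt; omega⟩)) := fun m =>
    disjoint_range_of_injective_concatMap hL U hbij.1 (by simp [Fin.ext_iff])
  choose V W W' hVW using fun m => exists_isShuffleFactorization (hU _) (hU _) (hdisj m)
  have hcomp : ∀ m : Fin M, U ⟨2 * m, by have := m.isLt; omega⟩ = V m ∘ W m ∧
      U ⟨2 * m + 1, by have := m.isLt; omega⟩ = V m ∘ W' m := fun m =>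
    ⟨(hVW m).eq_left, (hVW m).eq_right⟩
  have hV : Bijective (concatMap (by omega : 0 < 2 * L) V) :=
    bijective_concatMap_of_comp hL _ U V _
      (fun m => bijective_concatMap_pair hL (hVW m).range_right) hbij
      fun m => block_eq_comp_of_pair (hcomp m)
  refine ⟨⟨(V, W, W'), ⟨fun m => (hVW m).strictMono, hV, fun m => (hVW m).strictMono_left,
    fun m => (hVW m).strictMono_right, fun m => (hVW m).range_right, hcomp⟩, ?_⟩, ?_⟩
  · rintro ⟨V₂, W₂, W₂'⟩ ⟨hV₂, -, hW₂, hW₂', hrange₂, hcomp₂⟩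
    have h := fun m => IsShuffleFactorization.unique
      ⟨hV₂ m, hW₂ m, hW₂' m, hrange₂ m, (hcomp₂ m).1, (hcomp₂ m).2⟩ (hVW m)
    simp only [Prod.mk.injEq]
    exact ⟨funext fun m => (h m).1, funext fun m => (h m).2.1, funext fun m => (h m).2.2⟩
  · rintro ⟨V₂, W₂, W₂'⟩ ⟨-, -, -, -, hrange₂, hcomp₂⟩
    exact tupleSign_eq_mul_prod_of_comp hL _ U V₂ _
      (fun m => bijective_concatMap_pair hL (hrange₂ m)) hbij
      fun m => block_eq_comp_of_pair (hcomp₂ m)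
end
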